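/- arXiv:1704.08425 — 4 statements merged into one kernel-verified Lean document; each statement's English description precedes it below -/
import Mathlib

section
/- High-frequency L∞ bound via LMI (sufficiency direction of Theorem 3): Let 0 < ν < 2, φ = (π/2)(ν−1), δ > 0, ω_H > 0, and let A ∈ ℝ^{n×n}, B ∈ ℝ^{n×m}, C ∈ ℝ^{p×n}, D ∈ ℝ^{p×m}. Suppose there exist Hermitian matrices U, V ∈ ℂ^{n×n} with V positive definite such that, with X = e^{iφ}AᵀU and Y = BᵀVA + e^{iφ}BᵀU, the Hermitian block matrix [[Sym(X) + AᵀVA − ω_H^{2ν}V, Y*, Cᵀ],[Y, −δI_m + BᵀVB, Dᵀ],[C, D, −δI_p]] is negative definite. Then σmax(D) < δ, and for every ω ≥ ω_H the matrix ω^ν e^{iπν/2} I_n − A is invertible and σmax(C(ω^ν e^{iπν/2} I_n − A)^{−1}B + D) < δ. -/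
open Matrix Complex
open scoped Matrix Kronecker ComplexOrder

/-!
Testing the LMI with the vector `(x, u, δ⁻¹ (C x + D u))` gives, for `(x, u) ≠ 0` and
`z = A x + B u`, the dissipation inequality
`2 Re (e^{iφ} ⟪z, U x⟫) + ⟪z, V z⟫ - ω_H^{2ν} ⟪x, V x⟫ + δ⁻¹ ‖C x + D u‖² < δ ‖u‖²`.
Along a solution of `A x + B u = s x` with `s = ω^ν e^{iπν/2} = i ω^ν e^{iφ}` the `U`-term vanishes,
since `e^{iφ} s̄` is purely imaginary, and the `V`-terms add up to
`(ω^{2ν} - ω_H^{2ν}) ⟪x, V x⟫ ≥ 0`, leaving `‖C x + D u‖ < δ ‖u‖`. With `u = 0` this rules out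
eigenvectors of `A` for the eigenvalue `s`, and with `x = (s I - A)⁻¹ B u` it is the gain bound for
`G(iω)`. Taking `x = 0` bounds `D` in the same way, as `⟪B u, V B u⟫ ≥ 0`. The bounds stay strict
for the operator norm because the unit sphere is compact.
-/

/-- The largest singular value (ℓ² operator norm) of a complex matrix. -/
noncomputable def sigmaMax {m n : ℕ} (M : Matrix (Fin m) (Fin n) ℂ) : ℝ :=
  ‖LinearMap.toContinuousLinearMap (Matrix.toEuclideanLin M)‖

/-- A real matrix regarded as a complex matrix. -/
noncomputable def cmap {a b : ℕ} (M : Matrix (Fin a) (Fin b) ℝ) : Matrix (Fin a) (Fin b) ℂ :=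
  M.map Complex.ofReal

/-- ρ(θ, M) = [θ,1]* M [θ,1], real-valued for Hermitian M. -/
noncomputable def rho (θ : ℂ) (M : Matrix (Fin 2) (Fin 2) ℂ) : ℝ :=
  (star ![θ, 1] ⬝ᵥ M *ᵥ ![θ, 1]).re

/-- Δ₀ = [[0, e^{iφ}],[e^{−iφ}, 0]]. -/
noncomputable def Delta0 (φ : ℝ) : Matrix (Fin 2) (Fin 2) ℂ :=
  !![0, Complex.exp ((φ : ℂ) * Complex.I);
     Complex.exp (-(φ : ℂ) * Complex.I), 0]

/-- Σ₀ = [[α, β e^{iφ}],[β e^{−iφ}, γ]]. -/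
noncomputable def Sigma0 (φ α β γ : ℝ) : Matrix (Fin 2) (Fin 2) ℂ :=
  !![(α : ℂ), (β : ℂ) * Complex.exp ((φ : ℂ) * Complex.I);
     (β : ℂ) * Complex.exp (-(φ : ℂ) * Complex.I), (γ : ℂ)]

/-- A 3×3 block matrix. -/
noncomputable def block3 {n m p : ℕ}
    (A11 : Matrix (Fin n) (Fin n) ℂ) (A12 : Matrix (Fin n) (Fin m) ℂ)
    (A13 : Matrix (Fin n) (Fin p) ℂ)
    (A21 : Matrix (Fin m) (Fin n) ℂ) (A22 : Matrix (Fin m) (Fin m) ℂ)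
    (A23 : Matrix (Fin m) (Fin p) ℂ)
    (A31 : Matrix (Fin p) (Fin n) ℂ) (A32 : Matrix (Fin p) (Fin m) ℂ)
    (A33 : Matrix (Fin p) (Fin p) ℂ) :
    Matrix ((Fin n ⊕ Fin m) ⊕ Fin p) ((Fin n ⊕ Fin m) ⊕ Fin p) ℂ :=
  Matrix.fromBlocks (Matrix.fromBlocks A11 A12 A21 A22)
    (Matrix.fromRows A13 A23) (Matrix.fromCols A31 A32) A33

theorem transpose_cmap {a b : ℕ} (M : Matrix (Fin a) (Fin b) ℝ) : (cmap M)ᵀ = (cmap M)ᴴ := by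
  ext i j
  simp [cmap]

theorem ContinuousLinearMap.opNorm_lt_of_norm_apply_lt {𝕜 E F : Type*} [RCLike 𝕜]
    [NormedAddCommGroup E] [NormedSpace 𝕜 E] [FiniteDimensional 𝕜 E]
    [SeminormedAddCommGroup F] [NormedSpace 𝕜 F] (f : E →L[𝕜] F) {δ : ℝ} (hδ : 0 < δ)
    (h : ∀ x ≠ 0, ‖f x‖ < δ * ‖x‖) : ‖f‖ < δ := by
  have : ProperSpace E := FiniteDimensional.proper 𝕜 E
  rw [← f.sSup_sphere_eq_norm]
  rcases ((Metric.sphere (0 : E) 1).image fun x ↦ ‖f x‖).eq_empty_or_nonempty with hS | hS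
  · rwa [hS, Real.sSup_empty]
  · obtain ⟨x, hx, hfx⟩ := ((isCompact_sphere (0 : E) 1).image (by fun_prop)).sSup_mem hS
    rw [← hfx]
    simpa [mem_sphere_zero_iff_norm.1 hx] using h x (ne_zero_of_mem_unit_sphere ⟨x, hx⟩)

theorem EuclideanSpace.norm_toLp_sq_eq_star_dotProduct {ι : Type*} [Fintype ι] (v : ι → ℂ) :
    ((‖WithLp.toLp 2 v‖ : ℝ) : ℂ) ^ 2 = star v ⬝ᵥ v := by
  have h := inner_self_eq_norm_sq_to_K (𝕜 := ℂ) (WithLp.toLp 2 v)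
  rw [EuclideanSpace.inner_toLp_toLp, dotProduct_comm] at h
  exact_mod_cast h.symm

theorem sigmaMax_lt_of_forall_dotProduct_lt {a b : ℕ} (M : Matrix (Fin a) (Fin b) ℂ) {δ : ℝ}
    (hδ : 0 < δ)
    (h : ∀ u ≠ 0, star (M *ᵥ u) ⬝ᵥ (M *ᵥ u) < (δ : ℂ) ^ 2 * (star u ⬝ᵥ u)) :
    sigmaMax M < δ := by
  refine ContinuousLinearMap.opNorm_lt_of_norm_apply_lt _ hδ fun v hv ↦ ?_
  have hu := h v.ofLp (by simpa using hv)
  rw [← EuclideanSpace.norm_toLp_sq_eq_star_dotProduct,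
    ← EuclideanSpace.norm_toLp_sq_eq_star_dotProduct] at hu
  have hMv : toEuclideanLin M v = WithLp.toLp 2 (M *ᵥ v.ofLp) := rfl
  have : ‖toEuclideanLin M v‖ ^ 2 < (δ * ‖v‖) ^ 2 := by
    rw [hMv, mul_pow]; exact_mod_cast hu
  exact lt_of_pow_lt_pow_left₀ 2 (by positivity) this

/-- The gain bound `‖G(s) u‖ < δ ‖u‖`, stated on the solutions of `A x + B u = s x` so that it does
not presuppose that `s I - A` is invertible. -/
def FrequencyGainLt {n m p : ℕ} (A : Matrix (Fin n) (Fin n) ℂ) (B : Matrix (Fin n) (Fin m) ℂ)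
    (C : Matrix (Fin p) (Fin n) ℂ) (D : Matrix (Fin p) (Fin m) ℂ) (s : ℂ) (δ : ℝ) : Prop :=
  ∀ x u, (x ≠ 0 ∨ u ≠ 0) → A *ᵥ x + B *ᵥ u = s • x →
    star (C *ᵥ x + D *ᵥ u) ⬝ᵥ (C *ᵥ x + D *ᵥ u) < (δ : ℂ) ^ 2 * (star u ⬝ᵥ u)

section Transfer

variable {n m p : ℕ} {A : Matrix (Fin n) (Fin n) ℂ} {B : Matrix (Fin n) (Fin m) ℂ}
  {C : Matrix (Fin p) (Fin n) ℂ} {D : Matrix (Fin p) (Fin m) ℂ} {s : ℂ} {δ : ℝ}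

theorem FrequencyGainLt.isUnit_smul_one_sub (h : FrequencyGainLt A B C D s δ) :
    IsUnit (s • (1 : Matrix (Fin n) (Fin n) ℂ) - A) := by
  rw [isUnit_iff_isUnit_det, isUnit_iff_ne_zero, Ne, ← exists_mulVec_eq_zero_iff]
  rintro ⟨x, hx, hker⟩
  have hsol : A *ᵥ x + B *ᵥ 0 = s • x := by
    rw [sub_mulVec, smul_mulVec, one_mulVec, sub_eq_zero] at hker
    rw [mulVec_zero, add_zero, hker]
  have hlt := h x 0 (Or.inl hx) hsol
  simp only [mulVec_zero, add_zero, star_zero, dotProduct_zero, mul_zero] at hlt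
  exact (dotProduct_star_self_nonneg _).not_gt hlt

theorem FrequencyGainLt.sigmaMax_transfer_lt (h : FrequencyGainLt A B C D s δ) (hδ : 0 < δ) :
    sigmaMax (C * (s • (1 : Matrix (Fin n) (Fin n) ℂ) - A)⁻¹ * B + D) < δ := by
  have hdet := (isUnit_iff_isUnit_det _).mp h.isUnit_smul_one_sub
  refine sigmaMax_lt_of_forall_dotProduct_lt _ hδ fun u hu ↦ ?_
  set x := (s • (1 : Matrix (Fin n) (Fin n) ℂ) - A)⁻¹ *ᵥ (B *ᵥ u) with hx
  have hsol : A *ᵥ x + B *ᵥ u = s • x := by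
    have : (s • (1 : Matrix (Fin n) (Fin n) ℂ) - A) *ᵥ x = B *ᵥ u := by
      rw [hx, mulVec_mulVec, mul_nonsing_inv _ hdet, one_mulVec]
    rw [← this, sub_mulVec, smul_mulVec, one_mulVec]
    abel
  have hG : (C * (s • (1 : Matrix (Fin n) (Fin n) ℂ) - A)⁻¹ * B + D) *ᵥ u = C *ᵥ x + D *ᵥ u := by
    rw [add_mulVec, ← mulVec_mulVec, ← mulVec_mulVec]
  rw [hG]
  exact h x u (Or.inr hu) hsol

end Transfer

theorem star_dotProduct_conjTranspose_mulVec {ι κ R : Type*} [Fintype ι] [Fintype κ]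
    [Semiring R] [StarRing R] (M : Matrix ι κ R) (v : κ → R) (w : ι → R) :
    star v ⬝ᵥ (Mᴴ *ᵥ w) = star (M *ᵥ v) ⬝ᵥ w := by
  rw [dotProduct_mulVec, star_mulVec]

theorem dotProduct_block3_mulVec {n m p : ℕ}
    (A11 : Matrix (Fin n) (Fin n) ℂ) (A12 : Matrix (Fin n) (Fin m) ℂ)
    (A13 : Matrix (Fin n) (Fin p) ℂ)
    (A21 : Matrix (Fin m) (Fin n) ℂ) (A22 : Matrix (Fin m) (Fin m) ℂ)
    (A23 : Matrix (Fin m) (Fin p) ℂ)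
    (A31 : Matrix (Fin p) (Fin n) ℂ) (A32 : Matrix (Fin p) (Fin m) ℂ)
    (A33 : Matrix (Fin p) (Fin p) ℂ)
    (x : Fin n → ℂ) (u : Fin m → ℂ) (y : Fin p → ℂ) :
    star (Sum.elim (Sum.elim x u) y) ⬝ᵥ
      (block3 A11 A12 A13 A21 A22 A23 A31 A32 A33 *ᵥ Sum.elim (Sum.elim x u) y)
    = star x ⬝ᵥ A11 *ᵥ x + star x ⬝ᵥ A12 *ᵥ u + star x ⬝ᵥ A13 *ᵥ y
    + star u ⬝ᵥ A21 *ᵥ x + star u ⬝ᵥ A22 *ᵥ u + star u ⬝ᵥ A23 *ᵥ y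
    + star y ⬝ᵥ A31 *ᵥ x + star y ⬝ᵥ A32 *ᵥ u + star y ⬝ᵥ A33 *ᵥ y := by
  simp only [block3, Function.star_sumElim, fromBlocks_mulVec, Sum.elim_comp_inl,
    Sum.elim_comp_inr, fromRows_mulVec, fromCols_mulVec_sumElim, sumElim_dotProduct_sumElim,
    dotProduct_add]
  ring

/-- The LMI matrix with `X = e Aᴴ U` and `Y = Bᴴ V A + e Bᴴ U` substituted; the theorem has
`e = e^{iφ}`, `w = ω_H^{2ν}` and real `A, B, C, D`, for which `ᵀ = ᴴ`. -/
noncomputable def lmiMatrix {n m p : ℕ} (e : ℂ) (w δ : ℝ)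
    (A : Matrix (Fin n) (Fin n) ℂ) (B : Matrix (Fin n) (Fin m) ℂ)
    (C : Matrix (Fin p) (Fin n) ℂ) (D : Matrix (Fin p) (Fin m) ℂ)
    (U V : Matrix (Fin n) (Fin n) ℂ) :
    Matrix ((Fin n ⊕ Fin m) ⊕ Fin p) ((Fin n ⊕ Fin m) ⊕ Fin p) ℂ :=
  block3
    (e • (Aᴴ * U) + (e • (Aᴴ * U))ᴴ + Aᴴ * V * A - (w : ℂ) • V) (Bᴴ * V * A + e • (Bᴴ * U))ᴴ Cᴴ
    (Bᴴ * V * A + e • (Bᴴ * U)) (-(δ : ℂ) • 1 + Bᴴ * V * B) Dᴴ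
    C D (-(δ : ℂ) • 1)

section LMI

variable {n m p : ℕ} {e : ℂ} {w δ : ℝ}
  {A : Matrix (Fin n) (Fin n) ℂ} {B : Matrix (Fin n) (Fin m) ℂ}
  {C : Matrix (Fin p) (Fin n) ℂ} {D : Matrix (Fin p) (Fin m) ℂ} {U V : Matrix (Fin n) (Fin n) ℂ}

theorem dotProduct_lmiMatrix_mulVec (hU : U.IsHermitian) (hV : V.IsHermitian)
    (x : Fin n → ℂ) (u : Fin m → ℂ) (y : Fin p → ℂ) :
    star (Sum.elim (Sum.elim x u) y) ⬝ᵥ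
      (lmiMatrix e w δ A B C D U V *ᵥ Sum.elim (Sum.elim x u) y)
    = e * (star (A *ᵥ x + B *ᵥ u) ⬝ᵥ (U *ᵥ x))
      + star e * (star x ⬝ᵥ (U *ᵥ (A *ᵥ x + B *ᵥ u)))
      + star (A *ᵥ x + B *ᵥ u) ⬝ᵥ (V *ᵥ (A *ᵥ x + B *ᵥ u))
      - w * (star x ⬝ᵥ (V *ᵥ x)) - δ * (star u ⬝ᵥ u)
      + star (C *ᵥ x + D *ᵥ u) ⬝ᵥ y + star y ⬝ᵥ (C *ᵥ x + D *ᵥ u) - δ * (star y ⬝ᵥ y) := by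
  rw [lmiMatrix, dotProduct_block3_mulVec]
  simp only [conjTranspose_add, conjTranspose_smul, conjTranspose_mul, conjTranspose_conjTranspose,
    hU.eq, hV.eq, Matrix.mul_assoc, add_mulVec, sub_mulVec, smul_mulVec, neg_mulVec, neg_smul,
    one_mulVec, ← mulVec_mulVec, mulVec_add, star_add, dotProduct_add, add_dotProduct,
    dotProduct_sub, dotProduct_smul, dotProduct_neg, smul_eq_mul,
    star_dotProduct_conjTranspose_mulVec]
  ring

theorem lt_sq_mul_of_add_inv_mul_lt {K : Type*} [Field K] [PartialOrder K]
    [IsStrictOrderedRing K] {a r q δ : K} (hδ : 0 < δ) (ha : 0 ≤ a)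
    (h : a + δ⁻¹ * r < δ * q) : r < δ ^ 2 * q := by
  have h' := mul_lt_mul_of_pos_left ((le_add_of_nonneg_left ha).trans_lt h) hδ
  rwa [← mul_assoc, mul_inv_cancel₀ hδ.ne', one_mul, ← mul_assoc, ← sq] at h'

theorem dissipation_of_posDef_neg_lmiMatrix (hU : U.IsHermitian) (hV : V.IsHermitian)
    (hδ : 0 < δ) (hLMI : (-lmiMatrix e w δ A B C D U V).PosDef)
    {x : Fin n → ℂ} {u : Fin m → ℂ} (hxu : x ≠ 0 ∨ u ≠ 0) :
    e * (star (A *ᵥ x + B *ᵥ u) ⬝ᵥ (U *ᵥ x))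
      + star e * (star x ⬝ᵥ (U *ᵥ (A *ᵥ x + B *ᵥ u)))
      + star (A *ᵥ x + B *ᵥ u) ⬝ᵥ (V *ᵥ (A *ᵥ x + B *ᵥ u))
      - w * (star x ⬝ᵥ (V *ᵥ x))
      + (δ : ℂ)⁻¹ * (star (C *ᵥ x + D *ᵥ u) ⬝ᵥ (C *ᵥ x + D *ᵥ u)) < δ * (star u ⬝ᵥ u) := by
  set r := C *ᵥ x + D *ᵥ u
  -- `y = δ⁻¹ r` maximizes `2 Re ⟪r, y⟫ - δ ‖y‖²`, with maximum `δ⁻¹ ‖r‖²`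
  have hv : Sum.elim (Sum.elim x u) ((δ : ℂ)⁻¹ • r) ≠ 0 := by
    intro h0
    rcases hxu with hx | hu
    · exact hx (funext fun i ↦ congrFun h0 (Sum.inl (Sum.inl i)))
    · exact hu (funext fun i ↦ congrFun h0 (Sum.inl (Sum.inr i)))
  have hneg := hLMI.dotProduct_mulVec_pos hv
  rw [neg_mulVec, dotProduct_neg, neg_pos, dotProduct_lmiMatrix_mulVec hU hV] at hneg
  have hδ_star : star (δ : ℂ)⁻¹ = (δ : ℂ)⁻¹ := by simp
  simp only [star_smul, dotProduct_smul, smul_dotProduct, smul_eq_mul, hδ_star] at hneg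
  rw [← sub_neg]
  convert hneg using 1
  field_simp
  ring

theorem frequencyGainLt_of_posDef_neg_lmiMatrix (hU : U.IsHermitian) (hV : V.PosDef)
    (hδ : 0 < δ) (hLMI : (-lmiMatrix e w δ A B C D U V).PosDef) {s : ℂ}
    (hs : e * star s + star e * s = 0) (hw : w ≤ normSq s) :
    FrequencyGainLt A B C D s δ := by
  intro x u hxu hsol
  have h := dissipation_of_posDef_neg_lmiMatrix hU hV.isHermitian hδ hLMI hxu
  refine lt_sq_mul_of_add_inv_mul_lt (a := ((normSq s - w : ℝ) : ℂ) * (star x ⬝ᵥ (V *ᵥ x)))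
    (by exact_mod_cast hδ) ?_ ?_
  · exact mul_nonneg (by exact_mod_cast sub_nonneg.2 hw)
      (hV.posSemidef.dotProduct_mulVec_nonneg x)
  · convert h using 1
    have hnorm : ((normSq s : ℝ) : ℂ) = star s * s := Complex.normSq_eq_conj_mul_self
    rw [hsol, Complex.ofReal_sub, hnorm]
    simp only [star_smul, smul_dotProduct, mulVec_smul, dotProduct_smul, smul_eq_mul]
    linear_combination -(star x ⬝ᵥ (U *ᵥ x)) * hs

theorem feedthrough_gain_lt_of_posDef_neg_lmiMatrix (hU : U.IsHermitian) (hV : V.PosDef)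
    (hδ : 0 < δ) (hLMI : (-lmiMatrix e w δ A B C D U V).PosDef) {u : Fin m → ℂ} (hu : u ≠ 0) :
    star (D *ᵥ u) ⬝ᵥ (D *ᵥ u) < (δ : ℂ) ^ 2 * (star u ⬝ᵥ u) := by
  have h := dissipation_of_posDef_neg_lmiMatrix hU hV.isHermitian hδ hLMI (Or.inr hu) (x := 0)
  simp only [mulVec_zero, zero_add, star_zero, zero_dotProduct, dotProduct_zero, mul_zero,
    add_zero, sub_zero] at h
  exact lt_sq_mul_of_add_inv_mul_lt (by exact_mod_cast hδ)
    (hV.posSemidef.dotProduct_mulVec_nonneg _) h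

end LMI

theorem fos_Linf_high_frequency_general {n m p : ℕ} (ν φ δ ωH : ℝ)
    (hν : 0 < ν) (hφ : φ = (Real.pi / 2) * (ν - 1))
    (hδ : 0 < δ) (hωH : 0 < ωH)
    (A : Matrix (Fin n) (Fin n) ℝ) (B : Matrix (Fin n) (Fin m) ℝ)
    (C : Matrix (Fin p) (Fin n) ℝ) (D : Matrix (Fin p) (Fin m) ℝ)
    (U V : Matrix (Fin n) (Fin n) ℂ)
    (hU : U.IsHermitian) (hVpd : V.PosDef)
    (X : Matrix (Fin n) (Fin n) ℂ) (Y : Matrix (Fin m) (Fin n) ℂ)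
    (hX : X = Complex.exp ((φ : ℂ) * Complex.I) • ((cmap A)ᵀ * U))
    (hY : Y = (cmap B)ᵀ * V * cmap A +
      Complex.exp ((φ : ℂ) * Complex.I) • ((cmap B)ᵀ * U))
    (hLMI : (-(block3
      (X + Xᴴ + (cmap A)ᵀ * V * cmap A - ((ωH ^ (2 * ν) : ℝ) : ℂ) • V) Yᴴ (cmap C)ᵀ
      Y (-(δ : ℂ) • 1 + (cmap B)ᵀ * V * cmap B) (cmap D)ᵀ
      (cmap C) (cmap D) (-(δ : ℂ) • 1))).PosDef) :
    sigmaMax (cmap D) < δ ∧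
    ∀ ω : ℝ, ωH ≤ ω →
      IsUnit ((((ω ^ ν : ℝ) : ℂ) * Complex.exp ((Real.pi * ν / 2 : ℝ) * Complex.I)) •
          (1 : Matrix (Fin n) (Fin n) ℂ) - cmap A) ∧
      sigmaMax (cmap C *
        ((((ω ^ ν : ℝ) : ℂ) * Complex.exp ((Real.pi * ν / 2 : ℝ) * Complex.I)) •
          (1 : Matrix (Fin n) (Fin n) ℂ) - cmap A)⁻¹ * cmap B + cmap D) < δ := by
  subst hX hY
  set e := exp (φ * I)
  have hLMI' : (-lmiMatrix e (ωH ^ (2 * ν)) δ (cmap A) (cmap B) (cmap C) (cmap D) U V).PosDef := by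
    simpa only [lmiMatrix, transpose_cmap] using hLMI
  refine ⟨sigmaMax_lt_of_forall_dotProduct_lt _ hδ
    fun u hu ↦ feedthrough_gain_lt_of_posDef_neg_lmiMatrix hU hVpd hδ hLMI' hu, fun ω hω ↦ ?_⟩
  have hrot : exp ((Real.pi * ν / 2 : ℝ) * I) = e * I := by
    have harg : ((Real.pi * ν / 2 : ℝ) : ℂ) * I = φ * I + Real.pi / 2 * I := by
      rw [hφ]
      push_cast
      ring
    rw [harg, exp_add, exp_pi_div_two_mul_I]
  set s := ((ω ^ ν : ℝ) : ℂ) * exp ((Real.pi * ν / 2 : ℝ) * I)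
  have hs : e * star s + star e * s = 0 := by
    simp only [s, hrot, star_mul', Complex.star_def, conj_ofReal, conj_I]
    ring
  have hw : ωH ^ (2 * ν) ≤ normSq s := by
    have hω0 : 0 ≤ ω := hωH.le.trans hω
    calc ωH ^ (2 * ν) ≤ ω ^ (2 * ν) := Real.rpow_le_rpow hωH.le hω (by linarith)
      _ = (ω ^ ν) ^ 2 := by rw [mul_comm, Real.rpow_mul hω0, Real.rpow_two]
      _ = normSq s := by
        rw [normSq_mul, normSq_ofReal, normSq_eq_norm_sq, norm_exp_ofReal_mul_I, one_pow,
          mul_one, sq]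
  have hgain := frequencyGainLt_of_posDef_neg_lmiMatrix hU hVpd hδ hLMI' hs hw
  exact ⟨hgain.isUnit_smul_one_sub, hgain.sigmaMax_transfer_lt hδ⟩

/-- High-frequency L∞ bound via LMI (sufficiency direction of Theorem 3). -/
theorem fos_Linf_high_frequency {n m p : ℕ} (ν φ δ ωH : ℝ)
    (hν : 0 < ν) (hν2 : ν < 2) (hφ : φ = (Real.pi / 2) * (ν - 1))
    (hδ : 0 < δ) (hωH : 0 < ωH)
    (A : Matrix (Fin n) (Fin n) ℝ) (B : Matrix (Fin n) (Fin m) ℝ)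
    (C : Matrix (Fin p) (Fin n) ℝ) (D : Matrix (Fin p) (Fin m) ℝ)
    (U V : Matrix (Fin n) (Fin n) ℂ)
    (hU : U.IsHermitian) (hV : V.IsHermitian) (hVpd : V.PosDef)
    (X : Matrix (Fin n) (Fin n) ℂ) (Y : Matrix (Fin m) (Fin n) ℂ)
    (hX : X = Complex.exp ((φ : ℂ) * Complex.I) • ((cmap A)ᵀ * U))
    (hY : Y = (cmap B)ᵀ * V * cmap A +
      Complex.exp ((φ : ℂ) * Complex.I) • ((cmap B)ᵀ * U))
    (hLMI : (-(block3
      (X + Xᴴ + (cmap A)ᵀ * V * cmap A - ((ωH ^ (2 * ν) : ℝ) : ℂ) • V) Yᴴ (cmap C)ᵀ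
      Y (-(δ : ℂ) • 1 + (cmap B)ᵀ * V * cmap B) (cmap D)ᵀ
      (cmap C) (cmap D) (-(δ : ℂ) • 1))).PosDef) :
    sigmaMax (cmap D) < δ ∧
    ∀ ω : ℝ, ωH ≤ ω →
      IsUnit ((((ω ^ ν : ℝ) : ℂ) * Complex.exp ((Real.pi * ν / 2 : ℝ) * Complex.I)) •
          (1 : Matrix (Fin n) (Fin n) ℂ) - cmap A) ∧
      sigmaMax (cmap C *
        ((((ω ^ ν : ℝ) : ℂ) * Complex.exp ((Real.pi * ν / 2 : ℝ) * Complex.I)) •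
          (1 : Matrix (Fin n) (Fin n) ℂ) - cmap A)⁻¹ * cmap B + cmap D) < δ :=
  fos_Linf_high_frequency_general ν φ δ ωH hν hφ hδ hωH A B C D U V hU hVpd X Y hX hY hLMI
end

section
/- Hermitian 2×2 factorization (Lemma 6): Let 0 < ν < 2, φ = (π/2)(ν−1), and Q = diag(1, i e^{iφ}). Every Hermitian matrix Y ∈ ℂ^{2×2} admits real numbers α, β, γ and a real 2×2 matrix Z with det Z = 1 such that, writing L = Q*ZQ, one has Y = L*·[[α, β e^{iφ}],[β e^{−iφ}, γ]]·L. Moreover α and γ can be taken to be the two eigenvalues of the Hermitian matrix Y₀ = Q·(Y − β[[0, e^{iφ}],[e^{−iφ}, 0]])·Q* (which has real entries). -/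
open Matrix Complex
open scoped Matrix Kronecker ComplexOrder

/-!
Conjugation `M ↦ Q* M Q` by the unitary `Q` sends the Pauli matrix
`σ = [[0, -i], [i, 0]]` to `Δ₀` and `diag(α, γ) + β σ` to `Σ₀`. Choosing
`β = Re(e^{-iφ} Y₀₁)` makes the Hermitian matrix `Q (Y - β Δ₀) Q*` real, i.e. a real
symmetric `S`, which a rotation diagonalizes: `S = Zᵀ diag(α, γ) Z` with `det Z = 1`.
As `Zᵀ σ Z = (det Z) σ` for every `2 × 2` matrix,
`Y = Q* (S + β σ) Q = Q* Zᵀ (diag(α, γ) + β σ) Z Q = L* Σ₀ L`,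
and `α`, `γ` are the eigenvalues of `S`.
-/

theorem Matrix.IsHermitian.exists_mem_specialOrthogonalGroup_eq_transpose_mul_diagonal_mul
    {n : Type*} [Fintype n] [DecidableEq n] [Nonempty n] {S : Matrix n n ℝ}
    (hS : S.IsHermitian) :
    ∃ (d : n → ℝ) (Z : Matrix n n ℝ), Z ∈ specialOrthogonalGroup n ℝ ∧
      S = Zᵀ * diagonal d * Z := by
  obtain ⟨i⟩ := ‹Nonempty n›
  set U : Matrix n n ℝ := (hS.eigenvectorUnitary : Matrix n n ℝ)
  have hU : U ∈ orthogonalGroup n ℝ := hS.eigenvectorUnitary.2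
  have hUt : Uᵀ ∈ orthogonalGroup n ℝ := by
    simpa [star_eq_conjTranspose, conjTranspose_eq_transpose_of_trivial]
      using (star hS.eigenvectorUnitary).2
  set D := diagonal hS.eigenvalues
  have hS' : S = U * D * Uᵀ := by
    simpa [star_eq_conjTranspose, conjTranspose_eq_transpose_of_trivial] using hS.spectral_theorem
  -- reflecting the `i`-th axis when `det U = -1` fixes the determinant and commutes with `D`
  set δ := U.det
  have hδ : δ * δ = 1 := by simpa [unitary, δ] using (det_of_mem_unitary hU).2
  set P : Matrix n n ℝ := diagonal (Function.update 1 i δ)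
  have hPP : P * P = 1 := by
    rw [diagonal_mul_diagonal, ← diagonal_one]
    congr 1
    ext j
    rcases eq_or_ne j i with rfl | hj <;> simp [*]
  have hP : P ∈ orthogonalGroup n ℝ := by
    rw [mem_orthogonalGroup_iff]
    simpa [P, star_eq_conjTranspose, conjTranspose_eq_transpose_of_trivial] using hPP
  have hPD : P * D = D * P := by simp only [P, D, diagonal_mul_diagonal, mul_comm]
  refine ⟨hS.eigenvalues, P * Uᵀ,
    mem_specialOrthogonalGroup_iff.2 ⟨mul_mem hP hUt, ?_⟩, ?_⟩
  · rw [det_mul, det_transpose, det_diagonal, Finset.prod_update_of_mem (Finset.mem_univ i)]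
    simpa using hδ
  · calc S = U * D * (P * P) * Uᵀ := by rw [hPP, mul_one, hS']
      _ = U * (P * D) * (P * Uᵀ) := by rw [hPD]; simp only [mul_assoc]
      _ = (P * Uᵀ)ᵀ * D * (P * Uᵀ) := by
        rw [transpose_mul, transpose_transpose, show Pᵀ = P from diagonal_transpose _]
        simp only [mul_assoc]

lemma Matrix.transpose_mul_skew_mul_eq_det_smul {R : Type*} [CommRing R]
    (A : Matrix (Fin 2) (Fin 2) R) (c : R) :
    Aᵀ * !![0, -c; c, 0] * A = A.det • !![0, -c; c, 0] := by
  ext i j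
  fin_cases i <;> fin_cases j <;> simp [det_fin_two, mul_apply, Fin.sum_univ_two] <;> ring

lemma cmap_mul {a b c : ℕ} (A : Matrix (Fin a) (Fin b) ℝ) (B : Matrix (Fin b) (Fin c) ℝ) :
    cmap (A * B) = cmap A * cmap B :=
  Matrix.map_mul (f := ofRealHom)

lemma conjTranspose_cmap {a b : ℕ} (A : Matrix (Fin a) (Fin b) ℝ) :
    (cmap A)ᴴ = cmap Aᵀ := by
  ext i j
  simp [cmap]

lemma cmap_mem_unitaryGroup {n : ℕ} {Z : Matrix (Fin n) (Fin n) ℝ}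
    (hZ : Z ∈ orthogonalGroup (Fin n) ℝ) : cmap Z ∈ unitaryGroup (Fin n) ℂ := by
  rw [mem_unitaryGroup_iff', star_eq_conjTranspose, conjTranspose_cmap, ← cmap_mul]
  rw [mem_orthogonalGroup_iff'] at hZ
  simp [hZ, cmap]

lemma spectrum_cmap_transpose_mul_diagonal_mul {n : ℕ} {Z : Matrix (Fin n) (Fin n) ℝ}
    (hZ : Z ∈ orthogonalGroup (Fin n) ℝ) (d : Fin n → ℝ) :
    spectrum ℂ (cmap (Zᵀ * diagonal d * Z)) = Set.range (ofReal ∘ d) := by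
  have h := Unitary.spectrum_star_left_conjugate (R := ℂ) (a := diagonal (ofReal ∘ d))
    (U := ⟨cmap Z, cmap_mem_unitaryGroup hZ⟩)
  rw [spectrum_diagonal] at h
  rw [← h, cmap_mul, cmap_mul, ← conjTranspose_cmap]
  simp [cmap, star_eq_conjTranspose, Function.comp_def]

lemma Matrix.IsHermitian.eq_cmap_map_re {H : Matrix (Fin 2) (Fin 2) ℂ} (hH : H.IsHermitian)
    (h01 : (H 0 1).im = 0) : H = cmap (H.map re) := by
  have hdiag (i : Fin 2) : (H i i).im = 0 := conj_eq_iff_im.1 (hH.apply i i)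
  have h10 : (H 1 0).im = 0 := by rw [← hH.apply 1 0]; simp [h01]
  ext i j
  fin_cases i <;> fin_cases j <;> simp [cmap, Complex.ext_iff, h01, h10, hdiag]

noncomputable def pauliY : Matrix (Fin 2) (Fin 2) ℂ :=
  !![0, -I; I, 0]

lemma conjTranspose_cmap_mul_add_smul_pauliY_mul {Z : Matrix (Fin 2) (Fin 2) ℝ}
    (hZ : Z.det = 1) (D : Matrix (Fin 2) (Fin 2) ℝ) (b : ℂ) :
    (cmap Z)ᴴ * (cmap D + b • pauliY) * cmap Z = cmap (Zᵀ * D * Z) + b • pauliY := by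
  have hdet : (cmap Z).det = 1 := by
    rw [show cmap Z = ofRealHom.mapMatrix Z from rfl, ← RingHom.map_det, hZ, map_one]
  rw [conjTranspose_cmap, cmap_mul, cmap_mul, mul_add, add_mul, Matrix.mul_smul, Matrix.smul_mul,
    cmap, transpose_map, ← cmap, pauliY, transpose_mul_skew_mul_eq_det_smul, hdet, one_smul]

lemma conj_exp_ofReal_mul_I (φ : ℝ) : (starRingEnd ℂ) (exp (φ * I)) = exp (-φ * I) := by
  rw [← exp_conj]
  simp

section phase

variable (φ : ℝ)

noncomputable def phaseMatrix : Matrix (Fin 2) (Fin 2) ℂ :=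
  !![1, 0; 0, I * exp (φ * I)]

lemma phaseMatrix_mem_unitaryGroup : phaseMatrix φ ∈ unitaryGroup (Fin 2) ℂ := by
  rw [mem_unitaryGroup_iff]
  ext i j
  fin_cases i <;> fin_cases j <;>
    simp [phaseMatrix, mul_apply, Fin.sum_univ_two, conj_exp_ofReal_mul_I, exp_neg]
  field_simp
  simp [I_sq]

noncomputable def phaseConj :
    Matrix (Fin 2) (Fin 2) ℂ ≃⋆ₐ[ℂ] Matrix (Fin 2) (Fin 2) ℂ :=
  Unitary.conjStarAlgAut ℂ _ (star ⟨phaseMatrix φ, phaseMatrix_mem_unitaryGroup φ⟩)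

lemma phaseConj_apply (M : Matrix (Fin 2) (Fin 2) ℂ) :
    phaseConj φ M = (phaseMatrix φ)ᴴ * M * phaseMatrix φ := by
  simp [phaseConj, star_eq_conjTranspose]

lemma phaseConj_symm_apply (M : Matrix (Fin 2) (Fin 2) ℂ) :
    (phaseConj φ).symm M = phaseMatrix φ * M * (phaseMatrix φ)ᴴ := by
  simp [phaseConj, star_eq_conjTranspose]

lemma phaseConj_pauliY : phaseConj φ pauliY = Delta0 φ := by
  rw [phaseConj_apply]
  ext i j
  fin_cases i <;> fin_cases j <;>
    simp [phaseMatrix, pauliY, Delta0, mul_apply, Fin.sum_univ_two, conj_exp_ofReal_mul_I,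
      exp_neg] <;>
    field_simp <;> simp [I_sq]

lemma phaseConj_cmap_diagonal_add_smul_pauliY (β : ℝ) (d : Fin 2 → ℝ) :
    phaseConj φ (cmap (diagonal d) + (β : ℂ) • pauliY) = Sigma0 φ (d 0) β (d 1) := by
  rw [phaseConj_apply]
  ext i j
  fin_cases i <;> fin_cases j <;>
    simp [phaseMatrix, pauliY, Sigma0, cmap, mul_apply, Fin.sum_univ_two, conj_exp_ofReal_mul_I,
      exp_neg] <;>
    field_simp <;> ring_nf <;> simp [I_sq]

lemma isHermitian_Delta0 : (Delta0 φ).IsHermitian := by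
  ext i j
  fin_cases i <;> fin_cases j <;> simp [Delta0, ← exp_conj]

lemma im_phaseConj_symm_sub_smul_Delta0_apply_zero_one (β : ℝ) (Y : Matrix (Fin 2) (Fin 2) ℂ) :
    ((phaseConj φ).symm (Y - (β : ℂ) • Delta0 φ) 0 1).im =
      β - (exp (-φ * I) * Y 0 1).re := by
  have hentry : (phaseConj φ).symm (Y - (β : ℂ) • Delta0 φ) 0 1 =
      -I * (exp (-φ * I) * Y 0 1 - β) := by
    simp [phaseConj_symm_apply, phaseMatrix, Delta0, mul_apply, vecMul, dotProduct,
      Fin.sum_univ_two, conj_exp_ofReal_mul_I, exp_neg]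
    field_simp
  rw [hentry]
  simp

end phase

theorem hermitian_two_by_two_factorization_general (φ : ℝ)
    (Q : Matrix (Fin 2) (Fin 2) ℂ)
    (hQ : Q = !![1, 0; 0, Complex.I * Complex.exp ((φ : ℂ) * Complex.I)])
    (Y : Matrix (Fin 2) (Fin 2) ℂ) (hY : Y.IsHermitian) :
    ∃ (α β γ : ℝ) (Z : Matrix (Fin 2) (Fin 2) ℝ), Z.det = 1 ∧
      Y = (Qᴴ * cmap Z * Q)ᴴ * Sigma0 φ α β γ * (Qᴴ * cmap Z * Q) ∧
      spectrum ℂ (Q * (Y - (β : ℂ) • Delta0 φ) * Qᴴ) = {(α : ℂ), (γ : ℂ)} := by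
  obtain rfl : Q = phaseMatrix φ := hQ
  simp only [← phaseConj_apply, ← phaseConj_symm_apply]
  set β := (exp (-φ * I) * Y 0 1).re
  set H := (phaseConj φ).symm (Y - (β : ℂ) • Delta0 φ)
  have hH : H.IsHermitian :=
    ((hY.sub ((isHermitian_Delta0 φ).smul (conj_ofReal β))).isSelfAdjoint.map _).isHermitian
  have hHS : H = cmap (H.map re) :=
    hH.eq_cmap_map_re (by rw [im_phaseConj_symm_sub_smul_Delta0_apply_zero_one, sub_self])
  obtain ⟨d, Z, hZ, hS⟩ :=
    (hH.map re fun z => by simp).exists_mem_specialOrthogonalGroup_eq_transpose_mul_diagonal_mul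
  rw [hS] at hHS
  obtain ⟨hZo, hdet⟩ := mem_specialOrthogonalGroup_iff.1 hZ
  refine ⟨d 0, β, d 1, Z, hdet, ?_, ?_⟩
  · calc Y = phaseConj φ (H + (β : ℂ) • pauliY) := by
          rw [map_add, map_smul, StarAlgEquiv.apply_symm_apply, phaseConj_pauliY, sub_add_cancel]
      _ = phaseConj φ (star (cmap Z) * (cmap (diagonal d) + (β : ℂ) • pauliY) * cmap Z) := by
          rw [hHS, star_eq_conjTranspose, conjTranspose_cmap_mul_add_smul_pauliY_mul hdet]
      _ = _ := by
          rw [map_mul, map_mul, map_star, phaseConj_cmap_diagonal_add_smul_pauliY,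
            star_eq_conjTranspose]
  · change spectrum ℂ H = _
    rw [hHS, spectrum_cmap_transpose_mul_diagonal_mul hZo]
    ext
    simp [Fin.exists_fin_two, eq_comm]

/-- Hermitian 2×2 factorization (Lemma 6). -/
theorem hermitian_two_by_two_factorization (ν φ : ℝ)
    (hν : 0 < ν) (hν2 : ν < 2) (hφ : φ = (Real.pi / 2) * (ν - 1))
    (Q : Matrix (Fin 2) (Fin 2) ℂ)
    (hQ : Q = !![1, 0; 0, Complex.I * Complex.exp ((φ : ℂ) * Complex.I)])
    (Y : Matrix (Fin 2) (Fin 2) ℂ) (hY : Y.IsHermitian) :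
    ∃ (α β γ : ℝ) (Z : Matrix (Fin 2) (Fin 2) ℝ), Z.det = 1 ∧
      Y = (Qᴴ * cmap Z * Q)ᴴ * Sigma0 φ α β γ * (Qᴴ * cmap Z * Q) ∧
      spectrum ℂ (Q * (Y - (β : ℂ) • Delta0 φ) * Qᴴ) = {(α : ℂ), (γ : ℂ)} :=
  hermitian_two_by_two_factorization_general φ Q hQ Y hY
end

section
/- Rank-one characterization of the frequency set via the multiplier cone (pointwise form of Lemma 10): Let n, m ≥ 1, 0 < ν < 2, φ = (π/2)(ν−1), and let α, β, γ ∈ ℝ satisfy either 0 ≤ α ≤ γ or α < 0 < γ. Let T ∈ ℂ^{2×2} be invertible, Δ = T*Δ₀T, Σ = T*Σ₀T, and N ∈ ℂ^{2n×(n+m)}. Then for every nonzero η ∈ ℂ^{n+m}, the following are equivalent: (i) either there exists θ ∈ ℂ with ρ(θ,Δ) = 0, ρ(θ,Σ) ≥ 0 and [I_n, −θI_n]·Nη = 0, or else Δ₁₁ = 0, Σ₁₁ ≥ 0 and the last n entries of Nη are all zero (the θ = ∞ case); (ii) for all Hermitian U, V ∈ ℂ^{n×n} with V positive semidefinite, the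 (real) value η*N*(Δ ⊗ U + Σ ⊗ V)Nη is ≥ 0. -/
open Matrix Complex
open scoped Matrix Kronecker ComplexOrder

/-!
Write `Nη = vec Y`, so that the rows `yᵢ ∈ ℂ²` of `Y` are the pairs `((Nη)(0,i), (Nη)(1,i))`.
Then `η* N* (Δ ⊗ U + Σ ⊗ V) N η = tr (U G_Δ) + tr (V G_Σ)` with the Gram matrices
`G_M = (yⱼ* M yᵢ)ᵢⱼ`. Nonnegativity for `U = ±G_Δ` forces `G_Δ = 0`, and `V = Eᵢᵢ` gives
`yᵢ* Σ yᵢ ≥ 0`. Since `Δ` is nondegenerate on `ℂ²`, a family of pairwise `Δ`-orthogonal vectors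
spans at most a line, so all `yᵢ` are multiples of one `Δ`-isotropic `a` with `a* Σ a ≥ 0`;
writing `a ∝ [θ, 1]` or `a ∝ [1, 0]` gives the two alternatives. Conversely, for `Y = c aᵀ` the
form factors as `(a* Δ a)(c* U c) + (a* Σ a)(c* V c)`. If `Y = 0` such an `a` must still exist:
`T⁻¹e₁` works when `α ≥ 0`, and `T⁻¹e₂` when `γ ≥ 0`.
-/

namespace Matrix

variable {ι κ : Type*} [Fintype ι] [Fintype κ]

theorem star_dotProduct_conjTranspose_mul_mul_mulVec (P : Matrix ι κ ℂ) (M : Matrix ι ι ℂ)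
    (v : κ → ℂ) : star v ⬝ᵥ (Pᴴ * M * P) *ᵥ v = star (P *ᵥ v) ⬝ᵥ M *ᵥ (P *ᵥ v) := by
  rw [← mulVec_mulVec, ← mulVec_mulVec, dotProduct_mulVec, ← star_mulVec]

theorem star_smul_dotProduct_mulVec_smul (M : Matrix ι ι ℂ) (c : ℂ) (v : ι → ℂ) :
    star (c • v) ⬝ᵥ M *ᵥ (c • v) = (Complex.normSq c : ℂ) * (star v ⬝ᵥ M *ᵥ v) := by
  rw [star_smul, mulVec_smul, dotProduct_smul, smul_dotProduct, Complex.normSq_eq_conj_mul_self,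
    smul_eq_mul, smul_eq_mul, Complex.star_def]
  ring

theorem star_vec_dotProduct_kronecker_mulVec_vec (A : Matrix ι ι ℂ) (U : Matrix κ κ ℂ)
    (Y : Matrix κ ι ℂ) :
    star (vec Y) ⬝ᵥ (A ⊗ₖ U) *ᵥ vec Y = (U * (Y * Aᵀ * Yᴴ)).trace := by
  rw [kronecker_mulVec_vec, star_vec_dotProduct_vec, trace_mul_comm, Matrix.mul_assoc,
    Matrix.mul_assoc, Matrix.mul_assoc]

omit [Fintype κ] in
theorem mul_transpose_mul_conjTranspose_apply (A : Matrix ι ι ℂ) (Y : Matrix κ ι ℂ) (i j : κ) :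
    (Y * Aᵀ * Yᴴ) i j = star (Y j) ⬝ᵥ A *ᵥ Y i := by
  simp only [mul_apply, dotProduct, mulVec, transpose_apply, conjTranspose_apply, Pi.star_apply,
    Finset.sum_mul, Finset.mul_sum]
  exact Finset.sum_congr rfl fun _ _ => Finset.sum_congr rfl fun _ _ => by ring

theorem star_vec_vecMulVec_dotProduct_kronecker_mulVec (A : Matrix ι ι ℂ) (U : Matrix κ κ ℂ)
    (c : κ → ℂ) (a : ι → ℂ) :
    star (vec (vecMulVec c a)) ⬝ᵥ (A ⊗ₖ U) *ᵥ vec (vecMulVec c a) =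
      (star a ⬝ᵥ A *ᵥ a) * (star c ⬝ᵥ U *ᵥ c) := by
  simp only [dotProduct, mulVec, vec, vecMulVec_apply, kroneckerMap_apply, Pi.star_apply,
    Fintype.sum_prod_type, Finset.mul_sum, Finset.sum_mul, star_mul']
  rw [Finset.sum_comm]
  refine Finset.sum_congr rfl fun _ _ => ?_
  conv_rhs => rw [Finset.sum_comm]
  refine Finset.sum_congr rfl fun _ _ => ?_
  rw [Finset.sum_comm]
  exact Finset.sum_congr rfl fun _ _ => Finset.sum_congr rfl fun _ _ => by ring

theorem IsHermitian.eq_zero_of_forall_re_trace_mul_nonneg {G : Matrix ι ι ℂ}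
    (hG : G.IsHermitian) (h : ∀ U : Matrix ι ι ℂ, U.IsHermitian → 0 ≤ (U * G).trace.re) :
    G = 0 := by
  have hpos : 0 ≤ (Gᴴ * G).trace := (posSemidef_conjTranspose_mul_self G).trace_nonneg
  have hneg := h (-G) hG.neg
  rw [Matrix.neg_mul, trace_neg, Complex.neg_re] at hneg
  nth_rw 1 [← hG.eq] at hneg
  rw [← trace_conjTranspose_mul_self_eq_zero_iff]
  exact le_antisymm (Complex.le_def.2 ⟨by simpa using hneg, (Complex.le_def.1 hpos).2.symm⟩) hpos

end Matrix

open Matrix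

theorem exists_smul_eq_of_dotProduct_eq_zero {K : Type*} [Field K] {f v w : Fin 2 → K}
    (hf : f ≠ 0) (hv : v ≠ 0) (hfv : v ⬝ᵥ f = 0) (hfw : w ⬝ᵥ f = 0) : ∃ c : K, w = c • v := by
  have hdet : v 0 * w 1 = v 1 * w 0 := by
    rw [← sub_eq_zero, ← det_fin_two_of, ← exists_mulVec_eq_zero_iff]
    refine ⟨f, hf, ?_⟩
    ext k; fin_cases k
    · simpa [mulVec, dotProduct, Fin.sum_univ_two] using hfv
    · simpa [mulVec, dotProduct, Fin.sum_univ_two] using hfw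
  simp only [funext_iff, Fin.forall_fin_two, Pi.smul_apply, smul_eq_mul]
  by_cases hv0 : v 0 = 0
  · have hv1 : v 1 ≠ 0 := fun h => hv (funext <| Fin.forall_fin_two.2 ⟨hv0, h⟩)
    have hw0 : w 0 = 0 := by simpa [hv0, hv1] using hdet
    exact ⟨w 1 / v 1, by simp [hv0, hw0], by field_simp⟩
  · exact ⟨w 0 / v 0, by field_simp, by field_simp; linear_combination hdet⟩

section Frequency

variable {ι : Type*} [Fintype ι]

/-- `a` represents the point `θ = a 0 / a 1` of the projective line, with `θ = ∞` when
`a 1 = 0`. -/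
def IsFrequency (Δ S : Matrix ι ι ℂ) (a : ι → ℂ) : Prop :=
  a ≠ 0 ∧ star a ⬝ᵥ Δ *ᵥ a = 0 ∧ 0 ≤ (star a ⬝ᵥ S *ᵥ a).re

theorem IsFrequency.smul {Δ S : Matrix ι ι ℂ} {a : ι → ℂ} (ha : IsFrequency Δ S a) {c : ℂ}
    (hc : c ≠ 0) : IsFrequency Δ S (c • a) := by
  obtain ⟨ha0, haΔ, haS⟩ := ha
  refine ⟨smul_ne_zero hc ha0, ?_, ?_⟩
  · rw [star_smul_dotProduct_mulVec_smul, haΔ, mul_zero]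
  · rw [star_smul_dotProduct_mulVec_smul, Complex.re_ofReal_mul]
    exact mul_nonneg (Complex.normSq_nonneg c) haS

theorem IsFrequency.of_mulVec {Δ S T : Matrix ι ι ℂ} {a : ι → ℂ}
    (ha : IsFrequency Δ S (T *ᵥ a)) : IsFrequency (Tᴴ * Δ * T) (Tᴴ * S * T) a := by
  obtain ⟨ha0, haΔ, haS⟩ := ha
  refine ⟨fun h => ha0 (by rw [h, mulVec_zero]), ?_, ?_⟩ <;>
    rwa [star_dotProduct_conjTranspose_mul_mul_mulVec]

theorem re_kronecker_form_nonneg_of_isFrequency {κ : Type*} [Fintype κ]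
    {Δ S : Matrix ι ι ℂ} {a : ι → ℂ} (ha : IsFrequency Δ S a) (c : κ → ℂ)
    (U : Matrix κ κ ℂ) {V : Matrix κ κ ℂ} (hV : V.PosSemidef) :
    0 ≤ (star (vec (vecMulVec c a)) ⬝ᵥ (Δ ⊗ₖ U + S ⊗ₖ V) *ᵥ vec (vecMulVec c a)).re := by
  obtain ⟨-, haΔ, haS⟩ := ha
  obtain ⟨hVre, hVim⟩ := Complex.le_def.1 (hV.dotProduct_mulVec_nonneg c)
  rw [add_mulVec, dotProduct_add, star_vec_vecMulVec_dotProduct_kronecker_mulVec,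
    star_vec_vecMulVec_dotProduct_kronecker_mulVec, haΔ, zero_mul, zero_add, Complex.mul_re,
    ← hVim]
  simpa using mul_nonneg haS hVre

theorem exists_isFrequency_of_isotropic_rows {κ : Type*} {Δ S : Matrix (Fin 2) (Fin 2) ℂ}
    (hΔ : IsUnit Δ.det) (hne : ∃ a, IsFrequency Δ S a) {Y : Matrix κ (Fin 2) ℂ}
    (hYΔ : ∀ i j, star (Y i) ⬝ᵥ Δ *ᵥ Y j = 0) (hYS : ∀ i, 0 ≤ (star (Y i) ⬝ᵥ S *ᵥ Y i).re) :
    ∃ a, IsFrequency Δ S a ∧ ∃ c, Y = vecMulVec c a := by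
  by_cases hY : Y = 0
  · obtain ⟨a, ha⟩ := hne
    exact ⟨a, ha, 0, by rw [hY, zero_vecMulVec]⟩
  obtain ⟨k, hk⟩ : ∃ k, Y k ≠ 0 := by
    by_contra! h
    exact hY (funext h)
  have hf : star (Y k) ᵥ* Δ ≠ 0 := fun h =>
    hΔ.ne_zero (exists_vecMul_eq_zero_iff.1 ⟨_, star_ne_zero.2 hk, h⟩)
  have hline : ∀ i, ∃ c : ℂ, Y i = c • Y k := fun i =>
    exists_smul_eq_of_dotProduct_eq_zero hf hk
      (by rw [dotProduct_comm, ← dotProduct_mulVec, hYΔ])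
      (by rw [dotProduct_comm, ← dotProduct_mulVec, hYΔ])
  choose c hc using hline
  exact ⟨Y k, ⟨hk, hYΔ k k, hYS k⟩, c, by ext i p; simp [hc i, vecMulVec_apply]⟩

theorem exists_isFrequency_of_forall_re_kronecker_nonneg {κ : Type*} [Fintype κ] [DecidableEq κ]
    {Δ S : Matrix (Fin 2) (Fin 2) ℂ} (hΔh : Δ.IsHermitian) (hΔ : IsUnit Δ.det)
    (hne : ∃ a, IsFrequency Δ S a) {Y : Matrix κ (Fin 2) ℂ}
    (h : ∀ U V : Matrix κ κ ℂ, U.IsHermitian → V.PosSemidef →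
      0 ≤ (star (vec Y) ⬝ᵥ (Δ ⊗ₖ U + S ⊗ₖ V) *ᵥ vec Y).re) :
    ∃ a, IsFrequency Δ S a ∧ ∃ c, Y = vecMulVec c a := by
  have hform : ∀ U V : Matrix κ κ ℂ, star (vec Y) ⬝ᵥ (Δ ⊗ₖ U + S ⊗ₖ V) *ᵥ vec Y =
      (U * (Y * Δᵀ * Yᴴ)).trace + (V * (Y * Sᵀ * Yᴴ)).trace := fun U V => by
    rw [add_mulVec, dotProduct_add, star_vec_dotProduct_kronecker_mulVec_vec,
      star_vec_dotProduct_kronecker_mulVec_vec]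
  have hgram : Y * Δᵀ * Yᴴ = 0 := by
    refine (isHermitian_mul_mul_conjTranspose Y hΔh.transpose).eq_zero_of_forall_re_trace_mul_nonneg
      fun U hU => ?_
    simpa only [hform, Matrix.zero_mul, trace_zero, add_zero] using h U 0 hU .zero
  refine exists_isFrequency_of_isotropic_rows hΔ hne (fun i j => ?_) (fun i => ?_)
  · rw [← mul_transpose_mul_conjTranspose_apply, hgram, Matrix.zero_apply]
  · have hV : (single i i (1 : ℂ)).PosSemidef := by
      rw [← diagonal_single]
      exact .diagonal (Pi.single_nonneg.2 zero_le_one)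
    simpa only [hform, Matrix.zero_mul, trace_zero, zero_add, trace_single_mul, one_smul,
      mul_transpose_mul_conjTranspose_apply] using h 0 _ isHermitian_zero hV

end Frequency

section TwoByTwo

variable {Δ S : Matrix (Fin 2) (Fin 2) ℂ}

theorem isFrequency_vecCons_one_iff (hΔ : Δ.IsHermitian) (θ : ℂ) :
    IsFrequency Δ S ![θ, 1] ↔ rho θ Δ = 0 ∧ 0 ≤ rho θ S := by
  have him : (star ![θ, 1] ⬝ᵥ Δ *ᵥ ![θ, 1]).im = 0 := hΔ.im_star_dotProduct_mulVec_self _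
  have hre : star ![θ, 1] ⬝ᵥ Δ *ᵥ ![θ, 1] = 0 ↔ rho θ Δ = 0 := by
    rw [Complex.ext_iff, Complex.zero_im, and_iff_left him]
    rfl
  rw [IsFrequency, hre, and_iff_right (by simp)]
  rfl

theorem isFrequency_vecCons_zero_iff :
    IsFrequency Δ S ![1, 0] ↔ Δ 0 0 = 0 ∧ 0 ≤ (S 0 0).re := by
  simp [IsFrequency, dotProduct, mulVec, Fin.sum_univ_two]

theorem finite_or_infinite_frequency_iff_exists_isFrequency {κ : Type*} (hΔ : Δ.IsHermitian)
    (Y : Matrix κ (Fin 2) ℂ) :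
    ((∃ θ : ℂ, rho θ Δ = 0 ∧ 0 ≤ rho θ S ∧ ∀ i, Y i 0 = θ * Y i 1) ∨
      (Δ 0 0 = 0 ∧ 0 ≤ (S 0 0).re ∧ ∀ i, Y i 1 = 0)) ↔
      ∃ a, IsFrequency Δ S a ∧ ∃ c, Y = vecMulVec c a := by
  constructor
  · rintro (⟨θ, hΔθ, hSθ, hY⟩ | ⟨hΔ0, hS0, hY⟩)
    · refine ⟨![θ, 1], (isFrequency_vecCons_one_iff hΔ θ).2 ⟨hΔθ, hSθ⟩, fun i => Y i 1, ?_⟩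
      ext i p; fin_cases p <;> simp [vecMulVec_apply, hY i, mul_comm]
    · refine ⟨![1, 0], isFrequency_vecCons_zero_iff.2 ⟨hΔ0, hS0⟩, fun i => Y i 0, ?_⟩
      ext i p; fin_cases p <;> simp [vecMulVec_apply, hY i]
  · rintro ⟨a, ha, c, rfl⟩
    by_cases ha1 : a 1 = 0
    · have ha0 : a 0 ≠ 0 := fun h => ha.1 (funext <| Fin.forall_fin_two.2 ⟨h, ha1⟩)
      have hnorm : ![1, 0] = (a 0)⁻¹ • a := by
        ext k; fin_cases k <;> simp [ha0, ha1]
      obtain ⟨hΔ0, hS0⟩ := isFrequency_vecCons_zero_iff.1 (hnorm ▸ ha.smul (inv_ne_zero ha0))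
      exact Or.inr ⟨hΔ0, hS0, fun i => by simp [vecMulVec_apply, ha1]⟩
    · have hnorm : ![a 0 / a 1, 1] = (a 1)⁻¹ • a := by
        ext k; fin_cases k <;> simp [ha1, div_eq_inv_mul]
      obtain ⟨hΔθ, hSθ⟩ :=
        (isFrequency_vecCons_one_iff hΔ _).1 (hnorm ▸ ha.smul (inv_ne_zero ha1))
      exact Or.inl ⟨a 0 / a 1, hΔθ, hSθ, fun i => by simp [vecMulVec_apply]; field_simp⟩

end TwoByTwo

theorem isHermitian_delta0 (φ : ℝ) : (Delta0 φ).IsHermitian := by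
  ext i j
  fin_cases i <;> fin_cases j <;>
    simp [Delta0, ← Complex.exp_conj, Complex.conj_ofReal]

theorem det_delta0 (φ : ℝ) : (Delta0 φ).det = -1 := by
  simp [Delta0, det_fin_two_of, ← Complex.exp_add]

theorem exists_isFrequency_conj_delta0_sigma0 {T : Matrix (Fin 2) (Fin 2) ℂ} (hT : IsUnit T)
    (φ α β γ : ℝ) (hαγ : 0 ≤ α ∨ 0 ≤ γ) :
    ∃ a, IsFrequency (Tᴴ * Delta0 φ * T) (Tᴴ * Sigma0 φ α β γ * T) a := by
  obtain ⟨e, he⟩ : ∃ e, IsFrequency (Delta0 φ) (Sigma0 φ α β γ) e := by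
    rcases hαγ with hα | hγ
    · exact ⟨![1, 0], isFrequency_vecCons_zero_iff.2 ⟨by simp [Delta0], by simpa [Sigma0]⟩⟩
    · refine ⟨![0, 1], (isFrequency_vecCons_one_iff (isHermitian_delta0 φ) 0).2 ⟨?_, ?_⟩⟩ <;>
        simp [rho, Delta0, Sigma0, dotProduct, mulVec, Fin.sum_univ_two, hγ]
  refine ⟨T⁻¹ *ᵥ e, IsFrequency.of_mulVec ?_⟩
  rwa [mulVec_mulVec, mul_nonsing_inv _ ((isUnit_iff_isUnit_det T).1 hT), one_mulVec]

theorem rank_one_frequency_characterization_general {n m : ℕ} (φ : ℝ)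
    (α β γ : ℝ) (hαβγ : (0 ≤ α ∧ α ≤ γ) ∨ (α < 0 ∧ 0 < γ))
    (T : Matrix (Fin 2) (Fin 2) ℂ) (hT : IsUnit T)
    (Δ Sig : Matrix (Fin 2) (Fin 2) ℂ)
    (hΔ : Δ = Tᴴ * Delta0 φ * T) (hSig : Sig = Tᴴ * Sigma0 φ α β γ * T)
    (N : Matrix (Fin 2 × Fin n) (Fin (n + m)) ℂ)
    (η : Fin (n + m) → ℂ) :
    ((∃ θ : ℂ, rho θ Δ = 0 ∧ 0 ≤ rho θ Sig ∧
        ∀ i : Fin n, (N *ᵥ η) (0, i) = θ * (N *ᵥ η) (1, i)) ∨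
      (Δ 0 0 = 0 ∧ 0 ≤ (Sig 0 0).re ∧ ∀ i : Fin n, (N *ᵥ η) (1, i) = 0)) ↔
    (∀ U V : Matrix (Fin n) (Fin n) ℂ, U.IsHermitian → V.IsHermitian → V.PosSemidef →
      0 ≤ (star η ⬝ᵥ (Nᴴ * (Δ ⊗ₖ U + Sig ⊗ₖ V) * N) *ᵥ η).re) := by
  have hΔh : Δ.IsHermitian := hΔ ▸ isHermitian_conjTranspose_mul_mul T (isHermitian_delta0 φ)
  have hΔu : IsUnit Δ.det := by
    have hTu := (isUnit_iff_isUnit_det T).1 hT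
    rw [hΔ, det_mul, det_mul, det_conjTranspose, det_delta0]
    exact (hTu.star.mul isUnit_one.neg).mul hTu
  have hne : ∃ a, IsFrequency Δ Sig a :=
    hΔ ▸ hSig ▸ exists_isFrequency_conj_delta0_sigma0 hT φ α β γ (hαβγ.imp (·.1) (·.2.le))
  let Y : Matrix (Fin n) (Fin 2) ℂ := of fun i p => (N *ᵥ η) (p, i)
  have hY : N *ᵥ η = vec Y := rfl
  simp only [star_dotProduct_conjTranspose_mul_mul_mulVec, hY]
  refine (finite_or_infinite_frequency_iff_exists_isFrequency hΔh Y).trans ⟨?_, fun h => ?_⟩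
  · rintro ⟨a, ha, c, hc⟩ U V - - hV
    rw [hc]
    exact re_kronecker_form_nonneg_of_isFrequency ha c U hV
  · exact exists_isFrequency_of_forall_re_kronecker_nonneg hΔh hΔu hne
      fun U V hU hV => h U V hU hV.1 hV

/-- Rank-one characterization of the frequency set via the multiplier cone
(pointwise form of Lemma 10). -/
theorem rank_one_frequency_characterization {n m : ℕ} (hn : 1 ≤ n) (hm : 1 ≤ m)
    (ν φ : ℝ) (hν : 0 < ν) (hν2 : ν < 2) (hφ : φ = (Real.pi / 2) * (ν - 1))
    (α β γ : ℝ) (hαβγ : (0 ≤ α ∧ α ≤ γ) ∨ (α < 0 ∧ 0 < γ))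
    (T : Matrix (Fin 2) (Fin 2) ℂ) (hT : IsUnit T)
    (Δ Sig : Matrix (Fin 2) (Fin 2) ℂ)
    (hΔ : Δ = Tᴴ * Delta0 φ * T) (hSig : Sig = Tᴴ * Sigma0 φ α β γ * T)
    (N : Matrix (Fin 2 × Fin n) (Fin (n + m)) ℂ)
    (η : Fin (n + m) → ℂ) (hη : η ≠ 0) :
    ((∃ θ : ℂ, rho θ Δ = 0 ∧ 0 ≤ rho θ Sig ∧
        ∀ i : Fin n, (N *ᵥ η) (0, i) = θ * (N *ᵥ η) (1, i)) ∨
      (Δ 0 0 = 0 ∧ 0 ≤ (Sig 0 0).re ∧ ∀ i : Fin n, (N *ᵥ η) (1, i) = 0)) ↔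
    (∀ U V : Matrix (Fin n) (Fin n) ℂ, U.IsHermitian → V.IsHermitian → V.PosSemidef →
      0 ≤ (star η ⬝ᵥ (Nᴴ * (Δ ⊗ₖ U + Sig ⊗ₖ V) * N) *ᵥ η).re) :=
  rank_one_frequency_characterization_general φ α β γ hαβγ T hT Δ Sig hΔ hSig N η
end

section
/- Kernel/quadratic-form equivalence for the right half-plane, order 0 < ν ≤ 1 (Lemma 14 of the paper, with the half-plane region certified by its proof): Let 0 < ν ≤ 1 and s = sin(πν/2) > 0. Let f, g ∈ ℂⁿ and set ζ = (f, g) ∈ ℂ^{2n}. Then the following are equivalent. (i) Either g = 0, or there exists θ ∈ ℂ with Re θ ≥ 0 such that f = θg. (ii) For every Hermitian positive definite U ∈ ℂ^{n×n}, the (real) Hermitian-form value ζ*(([[0, 2s],[2s, 0]]) ⊗ U)ζ = 2s·(g*Uf + f*Ug) is ≥ 0. -/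
/-! For Hermitian `U` one has `fᴴUg = conj (gᴴUf)`, so the quadratic form equals
`4s · Re (gᴴUf)` and only the sign of `Re (gᴴUf)` matters. If `f = θg` this is
`Re θ · gᴴUg ≥ 0`. Conversely, split `f = θg + h` with `h ⊥ g`: `U = 1` forces `Re θ ≥ 0`,
and if `h ≠ 0` the positive definite matrix `U = 1 + vvᴴ` with `v = g + bh`, `b` real and
very negative, makes `Re (gᴴUf)` negative. -/

open Matrix Complex
open scoped Matrix Kronecker ComplexOrder

namespace Matrix

variable {ι 𝕜 : Type*} [Fintype ι] [RCLike 𝕜]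

open RCLike

theorem star_dotProduct_kronecker_mulVec {R κ : Type*} [CommSemiring R] [StarRing R]
    [Fintype κ] (M : Matrix κ κ R) (U : Matrix ι ι R) (x : κ → ι → R) :
    star (fun q : κ × ι => x q.1 q.2) ⬝ᵥ (M ⊗ₖ U) *ᵥ (fun q => x q.1 q.2) =
      ∑ i, ∑ j, M i j * (star (x i) ⬝ᵥ U *ᵥ x j) := by
  simp only [dotProduct, mulVec, kroneckerMap_apply, Fintype.sum_prod_type, Pi.star_apply,
    Finset.mul_sum]
  refine Finset.sum_congr rfl fun i _ => ?_
  rw [Finset.sum_comm]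
  refine Finset.sum_congr rfl fun j _ => Finset.sum_congr rfl fun a _ =>
    Finset.sum_congr rfl fun b _ => ?_
  ring

theorem IsHermitian.star_dotProduct_mulVec_swap {R : Type*} [CommSemiring R] [StarRing R]
    {U : Matrix ι ι R} (hU : U.IsHermitian) (f g : ι → R) :
    star f ⬝ᵥ U *ᵥ g = star (star g ⬝ᵥ U *ᵥ f) := by
  rw [star_dotProduct, star_mulVec, ← dotProduct_mulVec, hU.eq]

theorem PosSemidef.re_star_dotProduct_mulVec_smul {U : Matrix ι ι 𝕜} (hU : U.PosSemidef)
    (θ : 𝕜) (g : ι → 𝕜) :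
    re (star g ⬝ᵥ U *ᵥ (θ • g)) = re θ * re (star g ⬝ᵥ U *ᵥ g) := by
  have him : im (star g ⬝ᵥ U *ᵥ g) = 0 := (nonneg_iff.mp (hU.dotProduct_mulVec_nonneg g)).2
  rw [mulVec_smul, dotProduct_smul, smul_eq_mul, RCLike.mul_re, him, mul_zero, sub_zero]

theorem exists_eq_smul_add_star_dotProduct_eq_zero {g : ι → 𝕜} (hg : g ≠ 0) (f : ι → 𝕜) :
    ∃ (θ : 𝕜) (h : ι → 𝕜), f = θ • g + h ∧ star g ⬝ᵥ h = 0 := by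
  have hG : star g ⬝ᵥ g ≠ 0 := (dotProduct_star_self_pos_iff.mpr hg).ne'
  refine ⟨(star g ⬝ᵥ f) / (star g ⬝ᵥ g), _, (add_sub_cancel _ f).symm, ?_⟩
  rw [dotProduct_sub, dotProduct_smul, smul_eq_mul, div_mul_cancel₀ _ hG, sub_self]

theorem exists_posDef_re_star_dotProduct_mulVec_neg [DecidableEq ι] {g h : ι → 𝕜}
    (hg : g ≠ 0) (hh : h ≠ 0) (hgh : star g ⬝ᵥ h = 0) (θ : 𝕜) :
    ∃ U : Matrix ι ι 𝕜, U.PosDef ∧ re (star g ⬝ᵥ U *ᵥ (θ • g + h)) < 0 := by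
  obtain ⟨G, hG, hGg⟩ := pos_iff_exists_ofReal.mp (dotProduct_star_self_pos_iff.mpr hg)
  obtain ⟨H, hH, hHh⟩ := pos_iff_exists_ofReal.mp (dotProduct_star_self_pos_iff.mpr hh)
  -- `1 + v vᴴ` adds `(gᴴv)(vᴴf) = G (θG + bH)` to `gᴴf = θG`; `b` makes the real part `-G`.
  set b : ℝ := -(re θ * (1 + G) + 1) / H
  set v := g + (b : 𝕜) • h
  refine ⟨1 + vecMulVec v (star v), PosDef.one.add_posSemidef (posSemidef_vecMulVec_self_star v),
    ?_⟩
  have hhg : star h ⬝ᵥ g = 0 := by rw [star_dotProduct, hgh, star_zero]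
  have hform : star g ⬝ᵥ (1 + vecMulVec v (star v)) *ᵥ (θ • g + h) =
      θ * G * (1 + G) + b * G * H := by
    simp only [add_mulVec, one_mulVec, vecMulVec_mulVec, op_smul_eq_smul, v, dotProduct_add,
      add_dotProduct, dotProduct_smul, smul_dotProduct, star_add, star_smul, hgh, hhg,
      RCLike.star_def, RCLike.conj_ofReal, smul_eq_mul, ← hGg, ← hHh]
    ring
  have hbH : b * H = -(re θ * (1 + G) + 1) := div_mul_cancel₀ _ hH.ne'
  have hre : re (θ * G * (1 + G) + b * G * H : 𝕜) = -G := by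
    simp only [map_add, RCLike.mul_re, RCLike.ofReal_re, RCLike.ofReal_im, RCLike.one_re,
      RCLike.one_im, RCLike.mul_im]
    linear_combination G * hbH
  rw [hform, hre]
  exact neg_neg_of_pos hG

theorem forall_posDef_re_star_dotProduct_mulVec_nonneg_iff [DecidableEq ι] (f g : ι → 𝕜) :
    (∀ U : Matrix ι ι 𝕜, U.PosDef → 0 ≤ re (star g ⬝ᵥ U *ᵥ f)) ↔
      g = 0 ∨ ∃ θ : 𝕜, 0 ≤ re θ ∧ f = θ • g := by
  refine ⟨fun hf => or_iff_not_imp_left.mpr fun hg => ?_, ?_⟩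
  · obtain ⟨θ, h, rfl, hgh⟩ := exists_eq_smul_add_star_dotProduct_eq_zero hg f
    obtain rfl : h = 0 := by
      by_contra hh
      obtain ⟨U, hU, hneg⟩ := exists_posDef_re_star_dotProduct_mulVec_neg hg hh hgh θ
      exact (hf U hU).not_gt hneg
    refine ⟨θ, ?_, (add_zero _)⟩
    have hθ := hf 1 PosDef.one
    rw [add_zero, PosDef.one.posSemidef.re_star_dotProduct_mulVec_smul] at hθ
    exact nonneg_of_mul_nonneg_left hθ (PosDef.one.re_dotProduct_pos hg)
  · rintro (rfl | ⟨θ, hθ, rfl⟩) U hU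
    · simp
    · rw [hU.posSemidef.re_star_dotProduct_mulVec_smul]
      exact mul_nonneg hθ (hU.posSemidef.re_dotProduct_nonneg g)

end Matrix

theorem kernel_quadratic_form_right_half_plane_general {n : ℕ} (s : ℝ) (hspos : 0 < s)
    (f g : Fin n → ℂ) (ζ : Fin 2 × Fin n → ℂ)
    (hζ : ζ = fun q => ![f, g] q.1 q.2) :
    (g = 0 ∨ ∃ θ : ℂ, 0 ≤ θ.re ∧ f = θ • g) ↔
    (∀ U : Matrix (Fin n) (Fin n) ℂ, U.IsHermitian → U.PosDef →
      0 ≤ (star ζ ⬝ᵥ ((!![0, ((2 * s : ℝ) : ℂ); ((2 * s : ℝ) : ℂ), 0]) ⊗ₖ U) *ᵥ ζ).re) := by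
  have hform (U : Matrix (Fin n) (Fin n) ℂ) (hU : U.IsHermitian) :
      (star ζ ⬝ᵥ ((!![0, ((2 * s : ℝ) : ℂ); ((2 * s : ℝ) : ℂ), 0]) ⊗ₖ U) *ᵥ ζ).re =
        4 * s * (star g ⬝ᵥ U *ᵥ f).re := by
    rw [hζ, star_dotProduct_kronecker_mulVec, Fin.sum_univ_two, Fin.sum_univ_two,
      Fin.sum_univ_two]
    simp only [cons_val', cons_val_zero, cons_val_one, of_apply, zero_mul, zero_add, add_zero,
      hU.star_dotProduct_mulVec_swap f g, Complex.add_re, Complex.re_ofReal_mul,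
      Complex.star_def, Complex.conj_re]
    ring
  have hpos : (0 : ℝ) < 4 * s := by positivity
  refine (forall_posDef_re_star_dotProduct_mulVec_nonneg_iff f g).symm.trans
    ⟨fun h U hUh hU => ?_, fun h U hU => ?_⟩
  · rw [hform U hUh]
    exact mul_nonneg hpos.le (h U hU)
  · have := h U hU.isHermitian hU
    rwa [hform U hU.isHermitian, mul_nonneg_iff_of_pos_left hpos] at this

/-- Kernel/quadratic-form equivalence for the right half-plane, order 0 < ν ≤ 1 (Lemma 14). -/
theorem kernel_quadratic_form_right_half_plane {n : ℕ} (ν s : ℝ)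
    (hν : 0 < ν) (hν1 : ν ≤ 1) (hs : s = Real.sin (Real.pi * ν / 2)) (hspos : 0 < s)
    (f g : Fin n → ℂ) (ζ : Fin 2 × Fin n → ℂ)
    (hζ : ζ = fun q => ![f, g] q.1 q.2) :
    (g = 0 ∨ ∃ θ : ℂ, 0 ≤ θ.re ∧ f = θ • g) ↔
    (∀ U : Matrix (Fin n) (Fin n) ℂ, U.IsHermitian → U.PosDef →
      0 ≤ (star ζ ⬝ᵥ ((!![0, ((2 * s : ℝ) : ℂ); ((2 * s : ℝ) : ℂ), 0]) ⊗ₖ U) *ᵥ ζ).re) :=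
  kernel_quadratic_form_right_half_plane_general s hspos f g ζ hζ
end
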